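/- Let E ∈ M₂(ℝ̄) be idempotent and let H_E = {A ∈ M₂(ℝ̄) : A 𝓗 E} be its 𝓗-class, which is a group under ⊗ with identity E. Then: (i) if PC(E) = ∅ (i.e. E is the zero matrix), H_E is the trivial group; (ii) if PC(E) is a singleton, or a closed interval with exactly one endpoint in ℝ and the other in {−∞, +∞}, then H_E is isomorphic to the additive group ℝ; (iii) if PC(E) is a closed interval [x, y] with x, y ∈ ℝ and x < y, then H_E is isomorphic to ℝ × ℤ/2ℤ; (iv) if PC(E) = ℝ̂, then H_E is isomorphic to the wreath product ℝ ≀ ℤ/2ℤ, i.e. the semidirect product (ℝ × ℝ) ⋊ ℤ/2ℤ with ℤ/2ℤ acting by swapping coordinates. -/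

import Mathlib

open scoped Classical ENNReal

/-- The tropical semiring `ℝ̄ = ℝ ∪ {-∞}`, carried by `WithBot ℝ`;
tropical addition is `max` and tropical multiplication is `+`. -/
abbrev Rb : Type := WithBot ℝ

/-- Tropical matrix multiplication. -/
noncomputable def tMul {n : ℕ} (A B : Fin n → Fin n → Rb) : Fin n → Fin n → Rb :=
  fun i j => Finset.univ.sup fun k => A i k + B k j

/-- The column space of a matrix: all tropical linear combinations of its columns. -/
def ColSpace {n : ℕ} (A : Fin n → Fin n → Rb) : Set (Fin n → Rb) :=
  {v | ∃ c : Fin n → Rb, ∀ i, v i = Finset.univ.sup fun j => c j + A i j}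

/-- The row space of a matrix: all tropical linear combinations of its rows. -/
def RowSpace {n : ℕ} (A : Fin n → Fin n → Rb) : Set (Fin n → Rb) :=
  {v | ∃ c : Fin n → Rb, ∀ j, v j = Finset.univ.sup fun i => c i + A i j}

abbrev Mat2 : Type := Fin 2 → Fin 2 → Rb

/-- Inclusion of `ℝ̄` into the projective line `ℝ̂ = ℝ ∪ {-∞, +∞}` (modelled by `EReal`). -/
noncomputable def toE : Rb → EReal := WithBot.recBotCoe ⊥ (fun r : ℝ => (r : EReal))

/-- Projection of a vector `(a, b)` to `b - a ∈ ℝ̂`. -/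
noncomputable def projPt (v : Fin 2 → Rb) : EReal := toE (v 1) - toE (v 0)

def zeroVec : Fin 2 → Rb := fun _ => ⊥

/-- Projective column space. -/
noncomputable def PC (A : Mat2) : Set EReal :=
  {z | ∃ v ∈ ColSpace A, v ≠ zeroVec ∧ projPt v = z}

/-- Projective row space. -/
noncomputable def PR (A : Mat2) : Set EReal :=
  {z | ∃ v ∈ RowSpace A, v ≠ zeroVec ∧ projPt v = z}

/-- The metric `δ` on `ℝ̂`. -/
noncomputable def delta (x y : EReal) : ℝ≥0∞ :=
  if (∃ a : ℝ, x = (a : EReal)) ∧ (∃ b : ℝ, y = (b : EReal)) then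
    ENNReal.ofReal |x.toReal - y.toReal|
  else if x = y then 0 else ⊤

/-- `M` embeds isometrically into `N`. -/
def IsomEmbed (M N : Set EReal) : Prop :=
  ∃ f : EReal → EReal, Set.MapsTo f M N ∧ Set.InjOn f M ∧
    ∀ x ∈ M, ∀ y ∈ M, delta (f x) (f y) = delta x y

/-- `M` and `N` are isometric. -/
def Isom (M N : Set EReal) : Prop :=
  ∃ f : EReal → EReal, Set.BijOn f M N ∧
    ∀ x ∈ M, ∀ y ∈ M, delta (f x) (f y) = delta x y

/-- Closed convex subsets of `ℝ̂`: the empty set, singletons and closed intervals. -/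
def IsClosedConvex (S : Set EReal) : Prop :=
  S = ∅ ∨ ∃ x y : EReal, x ≤ y ∧ S = Set.Icc x y

noncomputable def leR (A B : Mat2) : Prop := ∃ X, A = tMul B X

noncomputable def leL (A B : Mat2) : Prop := ∃ X, A = tMul X B

noncomputable def relR (A B : Mat2) : Prop := leR A B ∧ leR B A

noncomputable def relL (A B : Mat2) : Prop := leL A B ∧ leL B A

/-- Green's relation `𝓗`. -/
noncomputable def relH (A B : Mat2) : Prop := relR A B ∧ relL A B

/-- The `𝓗`-class of a matrix. -/
noncomputable def Hclass (E : Mat2) : Set Mat2 := {A | relH A E}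

/-- Multiplication of the wreath product `ℝ ≀ ℤ/2ℤ`, i.e. the semidirect product
`(ℝ × ℝ) ⋊ ℤ/2ℤ` with `ℤ/2ℤ` acting by swapping the coordinates. -/
noncomputable def wMul (p q : (ℝ × ℝ) × ZMod 2) : (ℝ × ℝ) × ZMod 2 :=
  (p.1 + (if p.2 = 0 then q.1 else (q.1.2, q.1.1)), p.2 + q.2)

/-!
An idempotent `E ∈ M₂(ℝ̄)` is either the zero matrix, a rank-one matrix `u ⊗ vᵀ` with
`vᵀ ⊗ u = 0`, or a matrix with zero diagonal and off-diagonal entries `b, c` with `b ⊗ c < 0`;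
in the last case `PC(E)` is the interval from `c` to `-b`.

For `A ∈ H_E` we have `A = E ⊗ A ⊗ E`, which for rank-one `E` is a scalar multiple of `E`, so
`H_E ≅ ℝ`. For zero-diagonal `E`, the equations `A ⊗ Z = E = W ⊗ A` force one column of `A` to
project to `c` and another to `-b`, and similarly for the rows. This leaves only the scalar
multiples of `E`, together with, when `b` and `c` are finite, those of a square root `J` of `E`,
and, when `E` is the identity, all monomial matrices. Which of `⊥`, `⊤` lie in `PC(E)` tells the
cases apart.
-/

theorem le_add_or_le_add_of_max_add_eq_zero {α : Type*} [AddCommMonoid α] [LinearOrder α]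
    [IsOrderedAddMonoid α] {a a' d d' z z' f : α}
    (h : max (a + z) (a' + z') = 0) (hf : max (d + z) (d' + z') ≤ f) :
    d ≤ f + a ∨ d' ≤ f + a' := by
  rcases max_choice (a + z) (a' + z') with h' | h'
  · left
    calc d = d + z + a := by rw [add_assoc, add_comm z, ← h', h, add_zero]
      _ ≤ f + a := by gcongr; exact (le_max_left _ _).trans hf
  · right
    calc d' = d' + z' + a' := by rw [add_assoc, add_comm z', ← h', h, add_zero]
      _ ≤ f + a' := by gcongr; exact (le_max_right _ _).trans hf

theorem ne_bot_or_ne_bot_of_max_add_eq_zero {a a' z z' : Rb}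
    (h : max (a + z) (a' + z') = 0) : a ≠ ⊥ ∨ a' ≠ ⊥ := by
  by_contra! h'
  simp [h'] at h

theorem ne_bot_of_coe_add_le {x y : Rb} {b : ℝ} (h : (b : Rb) + x ≤ y) (hx : x ≠ ⊥) :
    y ≠ ⊥ := by
  rintro rfl
  simp_all

theorem eq_of_max_add_self_eq {a x : Rb} (h : max (a + a) x = a) (ha : a ≠ 0) : x = a := by
  cases a using WithBot.recBotCoe with
  | bot => simpa using h
  | coe r =>
    rcases max_choice ((r : Rb) + r) x with h' | h'
    · rw [h', ← WithBot.coe_add, WithBot.coe_inj] at h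
      exact absurd (by linarith) (ha ∘ WithBot.coe_eq_zero.2)
    · rwa [h'] at h

theorem eq_bot_of_add_eq_self {a b : Rb} (h : a + b = b) (ha : a ≠ 0) : b = ⊥ := by
  cases b using WithBot.recBotCoe with
  | bot => rfl
  | coe r =>
    cases a using WithBot.recBotCoe with
    | bot => simp at h
    | coe s =>
      rw [← WithBot.coe_add, WithBot.coe_inj] at h
      exact absurd (by linarith) (ha ∘ WithBot.coe_eq_zero.2)

theorem sup_univ_fin_two (f : Fin 2 → Rb) : Finset.univ.sup f = max (f 0) (f 1) := by
  simp [Fin.univ_succ]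

def mat2 (a b c d : Rb) : Mat2 := ![![a, b], ![c, d]]

@[simp] theorem mat2_apply_zero_zero (a b c d : Rb) : mat2 a b c d 0 0 = a := rfl
@[simp] theorem mat2_apply_zero_one (a b c d : Rb) : mat2 a b c d 0 1 = b := rfl
@[simp] theorem mat2_apply_one_zero (a b c d : Rb) : mat2 a b c d 1 0 = c := rfl
@[simp] theorem mat2_apply_one_one (a b c d : Rb) : mat2 a b c d 1 1 = d := rfl

theorem eq_mat2 (A : Mat2) : A = mat2 (A 0 0) (A 0 1) (A 1 0) (A 1 1) := by
  ext i j; fin_cases i <;> fin_cases j <;> rfl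

theorem mat2_inj {a b c d a' b' c' d' : Rb} :
    mat2 a b c d = mat2 a' b' c' d' ↔ a = a' ∧ b = b' ∧ c = c' ∧ d = d' := by
  refine ⟨fun h => ?_, fun ⟨rfl, rfl, rfl, rfl⟩ => rfl⟩
  exact ⟨congrFun (congrFun h 0) 0, congrFun (congrFun h 0) 1,
    congrFun (congrFun h 1) 0, congrFun (congrFun h 1) 1⟩

theorem tMul_apply (A B : Mat2) (i j : Fin 2) :
    tMul A B i j = max (A i 0 + B 0 j) (A i 1 + B 1 j) :=
  sup_univ_fin_two _

theorem tMul_mat2 (a b c d a' b' c' d' : Rb) :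
    tMul (mat2 a b c d) (mat2 a' b' c' d') =
      mat2 (max (a + a') (b + c')) (max (a + b') (b + d'))
        (max (c + a') (d + c')) (max (c + b') (d + d')) := by
  ext i j; rw [tMul_apply]; fin_cases i <;> fin_cases j <;> rfl

theorem tMul_assoc (A B C : Mat2) : tMul (tMul A B) C = tMul A (tMul B C) := by
  ext i j
  simp only [tMul_apply, max_add, add_max, add_assoc]
  exact max_max_max_comm _ _ _ _

def shift (t : ℝ) (A : Mat2) : Mat2 := fun i j => (t : Rb) + A i j

theorem tMul_shift_left (t : ℝ) (A B : Mat2) : tMul (shift t A) B = shift t (tMul A B) := by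
  ext i j
  simp only [tMul_apply, shift, add_max, add_assoc]

theorem tMul_shift_right (t : ℝ) (A B : Mat2) : tMul A (shift t B) = shift t (tMul A B) := by
  ext i j
  simp only [tMul_apply, shift, add_max]
  congr 1 <;> ac_rfl

theorem shift_shift (s t : ℝ) (A : Mat2) : shift s (shift t A) = shift (s + t) A := by
  ext i j
  simp only [shift, WithBot.coe_add, add_assoc]

theorem shift_zero (A : Mat2) : shift 0 A = A := by
  ext i j
  simp [shift]

theorem shift_mat2 (t : ℝ) (a b c d : Rb) :
    shift t (mat2 a b c d) = mat2 (t + a) (t + b) (t + c) (t + d) := by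
  ext i j; fin_cases i <;> fin_cases j <;> rfl

def transp (A : Mat2) : Mat2 := fun i j => A j i

theorem transp_shift (t : ℝ) (A : Mat2) : transp (shift t A) = shift t (transp A) := rfl

theorem transp_transp (A : Mat2) : transp (transp A) = A := rfl

theorem transp_tMul (A B : Mat2) : transp (tMul A B) = tMul (transp B) (transp A) := by
  ext i j
  simp only [transp, tMul_apply, add_comm]

theorem transp_mat2 (a b c d : Rb) : transp (mat2 a b c d) = mat2 a c b d := by
  ext i j; fin_cases i <;> fin_cases j <;> rfl

theorem mem_Hclass_iff {E A : Mat2} (hE : tMul E E = E) :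
    A ∈ Hclass E ↔
      tMul E A = A ∧ tMul A E = A ∧ (∃ Z, tMul A Z = E) ∧ ∃ W, tMul W A = E := by
  constructor
  · rintro ⟨⟨⟨X, rfl⟩, ⟨Z, hZ⟩⟩, ⟨⟨Y, hY⟩, ⟨W, hW⟩⟩⟩
    refine ⟨by rw [← tMul_assoc, hE], ?_, ⟨Z, hZ.symm⟩, ⟨W, hW.symm⟩⟩
    rw [hY, tMul_assoc, hE, ← hY]
  · rintro ⟨hEA, hAE, ⟨Z, hZ⟩, ⟨W, hW⟩⟩
    exact ⟨⟨⟨A, hEA.symm⟩, ⟨Z, hZ.symm⟩⟩, ⟨⟨A, hAE.symm⟩, ⟨W, hW.symm⟩⟩⟩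

theorem transp_mem_Hclass {A E : Mat2} (h : A ∈ Hclass E) : transp A ∈ Hclass (transp E) := by
  obtain ⟨⟨⟨X, hX⟩, ⟨Z, hZ⟩⟩, ⟨⟨Y, hY⟩, ⟨W, hW⟩⟩⟩ := h
  exact ⟨⟨⟨transp Y, by rw [hY, transp_tMul]⟩, ⟨transp W, by rw [hW, transp_tMul]⟩⟩,
    ⟨⟨transp X, by rw [hX, transp_tMul]⟩, ⟨transp Z, by rw [hZ, transp_tMul]⟩⟩⟩

theorem tMul_bot_left (X : Mat2) : tMul ⊥ X = ⊥ := by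
  ext i j
  simp [tMul_apply]

theorem Hclass_bot : Hclass ⊥ = {⊥} := by
  have h := tMul_bot_left ⊥
  refine Set.eq_singleton_iff_unique_mem.2
    ⟨(mem_Hclass_iff h).2 ⟨h, h, ⟨⊥, h⟩, ⟨⊥, h⟩⟩, ?_⟩
  rintro A ⟨⟨⟨X, rfl⟩, -⟩, -⟩
  exact tMul_bot_left X

theorem range_subset_Hclass_of_hom {G : Type*} {mul : G → G → G} (g : G → Mat2) (e : G)
    (hmul : ∀ x y, g (mul x y) = tMul (g x) (g y)) (he : ∀ x, mul e x = x ∧ mul x e = x)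
    (hinv : ∀ x, ∃ y, mul x y = e ∧ mul y x = e) : Set.range g ⊆ Hclass (g e) := by
  have hE : tMul (g e) (g e) = g e := by rw [← hmul, (he e).1]
  rintro _ ⟨x, rfl⟩
  obtain ⟨y, hxy, hyx⟩ := hinv x
  refine (mem_Hclass_iff hE).2 ⟨?_, ?_, ⟨g y, ?_⟩, ⟨g y, ?_⟩⟩ <;>
    rw [← hmul] <;> simp only [he, hxy, hyx]

theorem exists_bijOn_hom_of_injective {M G : Type*} [Nonempty G] {mulM : M → M → M}
    {mulG : G → G → G} {H : Set M} (g : G → M) (hg : Function.Injective g)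
    (hH : Set.range g = H) (hmul : ∀ x y, g (mulG x y) = mulM (g x) (g y)) :
    ∃ f : M → G, Set.BijOn f H Set.univ ∧
      ∀ A ∈ H, ∀ B ∈ H, f (mulM A B) = mulG (f A) (f B) := by
  subst hH
  have hinv := Function.leftInverse_invFun hg
  refine ⟨Function.invFun g,
    ⟨fun _ _ => trivial, ?_, fun x _ => ⟨g x, ⟨x, rfl⟩, hinv x⟩⟩, ?_⟩
  · rintro _ ⟨x, rfl⟩ _ ⟨y, rfl⟩ h
    rw [hinv, hinv] at h
    rw [h]
  · rintro _ ⟨x, rfl⟩ _ ⟨y, rfl⟩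
    rw [← hmul, hinv, hinv, hinv]

def outer (u v : Fin 2 → Rb) : Mat2 := fun i j => u i + v j

theorem outer_eq_mat2 (u v : Fin 2 → Rb) :
    outer u v = mat2 (u 0 + v 0) (u 0 + v 1) (u 1 + v 0) (u 1 + v 1) := eq_mat2 _

-- `⊥ : Mat2` is the tropical zero matrix; `0 : Mat2` would be the matrix of real zeros.
theorem idempotent_cases {E : Mat2} (hE : tMul E E = E) :
    E = ⊥ ∨ (∃ u v, E = outer u v ∧ E ≠ ⊥) ∨
      ∃ b c : Rb, b + c < 0 ∧ E = mat2 0 b c 0 := by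
  rw [eq_mat2 E] at hE ⊢
  generalize E 0 0 = a, E 0 1 = b, E 1 0 = c, E 1 1 = d at hE ⊢
  rw [tMul_mat2, mat2_inj] at hE
  obtain ⟨h00, h01, h10, h11⟩ := hE
  have h11' : max (d + d) (c + b) = d := (max_comm _ _).trans h11
  by_cases ha : a = 0 <;> by_cases hd : d = 0
  · subst ha hd
    have hbc : b + c ≤ 0 := by simpa using h00
    rcases hbc.lt_or_eq with hbc | hbc
    · exact Or.inr (Or.inr ⟨b, c, hbc, rfl⟩)
    · refine Or.inr (Or.inl ⟨![0, c], ![0, b], ?_,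
        fun h => by simpa using congrFun (congrFun h 0) 0⟩)
      simp [outer_eq_mat2, add_comm c, hbc]
  · obtain rfl := eq_of_max_add_self_eq h11' hd
    subst ha
    exact Or.inr (Or.inl ⟨![0, c], ![0, b], by simp [outer_eq_mat2],
      fun h => by simpa using congrFun (congrFun h 0) 0⟩)
  · obtain rfl := eq_of_max_add_self_eq h00 ha
    subst hd
    exact Or.inr (Or.inl ⟨![b, 0], ![c, 0], by simp [outer_eq_mat2],
      fun h => by simpa using congrFun (congrFun h 1) 1⟩)
  · have hda : d = a := by
      rw [← eq_of_max_add_self_eq h00 ha, ← eq_of_max_add_self_eq h11' hd, add_comm]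
    subst hda
    have hb : b = ⊥ := eq_bot_of_add_eq_self (by rwa [add_comm b, max_self] at h01) hd
    have hd : d = ⊥ := by rw [← eq_of_max_add_self_eq h00 ha, hb, WithBot.bot_add]
    subst hb hd
    have hc : c = ⊥ := by simpa using h10.symm
    subst hc
    exact Or.inl (eq_mat2 ⊥).symm

@[simp] theorem toE_coe (r : ℝ) : toE r = r := rfl

@[simp] theorem toE_bot : toE ⊥ = ⊥ := rfl

theorem mem_ColSpace_iff {A : Mat2} {v : Fin 2 → Rb} :
    v ∈ ColSpace A ↔ ∃ c : Fin 2 → Rb, ∀ i, v i = max (c 0 + A i 0) (c 1 + A i 1) := by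
  simp only [ColSpace, Set.mem_ofPred_eq, sup_univ_fin_two]

theorem ne_zeroVec_iff {v : Fin 2 → Rb} : v ≠ zeroVec ↔ v 0 ≠ ⊥ ∨ v 1 ≠ ⊥ := by
  rw [← not_and_or, not_iff_not]
  refine ⟨fun h => ⟨congrFun h 0, congrFun h 1⟩, fun h => funext fun i => ?_⟩
  fin_cases i
  exacts [h.1, h.2]

theorem projPt_eq_bot_iff {v : Fin 2 → Rb} : projPt v = ⊥ ↔ v 1 = ⊥ := by
  unfold projPt
  cases v 0 using WithBot.recBotCoe <;> cases v 1 using WithBot.recBotCoe <;>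
    simp [toE, ← EReal.coe_sub]

theorem projPt_eq_top_iff {v : Fin 2 → Rb} : projPt v = ⊤ ↔ v 0 = ⊥ ∧ v 1 ≠ ⊥ := by
  unfold projPt
  cases v 0 using WithBot.recBotCoe <;> cases v 1 using WithBot.recBotCoe <;>
    simp [toE, ← EReal.coe_sub]

theorem projPt_shift (t : ℝ) (v : Fin 2 → Rb) :
    projPt (fun i => (t : Rb) + v i) = projPt v := by
  show toE (t + v 1) - toE (t + v 0) = toE (v 1) - toE (v 0)
  cases v 0 using WithBot.recBotCoe <;> cases v 1 using WithBot.recBotCoe <;>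
    simp [toE, ← WithBot.coe_add, ← EReal.coe_sub, -EReal.coe_add, add_sub_add_left_eq_sub]

theorem projPt_col_mem_PC (A : Mat2) (j : Fin 2) (hj : A 0 j ≠ ⊥ ∨ A 1 j ≠ ⊥) :
    projPt (fun i => A i j) ∈ PC A := by
  refine ⟨fun i => A i j, mem_ColSpace_iff.2 ?_, ne_zeroVec_iff.2 hj, rfl⟩
  fin_cases j
  exacts [⟨![0, ⊥], fun i => by simp⟩, ⟨![⊥, 0], fun i => by simp⟩]

theorem PC_bot : PC ⊥ = ∅ := by
  refine Set.eq_empty_of_forall_notMem fun z ⟨v, hv, hne, _⟩ => hne ?_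
  obtain ⟨c, hc⟩ := mem_ColSpace_iff.1 hv
  ext i
  simp [hc i, zeroVec]

theorem PC_nonempty {A : Mat2} (hA : A ≠ ⊥) : (PC A).Nonempty := by
  obtain ⟨i, j, hij⟩ : ∃ i j, A i j ≠ ⊥ := by
    by_contra! h; exact hA (funext fun i => funext (h i))
  refine ⟨_, projPt_col_mem_PC A j ?_⟩
  fin_cases i
  exacts [Or.inl hij, Or.inr hij]

theorem bot_notMem_PC {A : Mat2} (h0 : A 1 0 ≠ ⊥) (h1 : A 1 1 ≠ ⊥) : ⊥ ∉ PC A := by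
  rintro ⟨v, hv, hne, hbot⟩
  obtain ⟨c, hc⟩ := mem_ColSpace_iff.1 hv
  have hv1 := projPt_eq_bot_iff.1 hbot
  rw [hc 1, max_eq_bot, WithBot.add_eq_bot, WithBot.add_eq_bot] at hv1
  have hc0 : c 0 = ⊥ := hv1.1.resolve_right h0
  have hc1 : c 1 = ⊥ := hv1.2.resolve_right h1
  rw [ne_zeroVec_iff, hc 0, hc 1, hc0, hc1] at hne
  simp at hne

theorem top_notMem_PC {A : Mat2} (h0 : A 0 0 ≠ ⊥) (h1 : A 0 1 ≠ ⊥) : ⊤ ∉ PC A := by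
  rintro ⟨v, hv, -, htop⟩
  obtain ⟨c, hc⟩ := mem_ColSpace_iff.1 hv
  obtain ⟨hv0, hv1⟩ := projPt_eq_top_iff.1 htop
  rw [hc 0, max_eq_bot, WithBot.add_eq_bot, WithBot.add_eq_bot] at hv0
  have hc0 : c 0 = ⊥ := hv0.1.resolve_right h0
  have hc1 : c 1 = ⊥ := hv0.2.resolve_right h1
  simp [hc 1, hc0, hc1] at hv1

theorem PC_outer_subsingleton (u v : Fin 2 → Rb) : (PC (outer u v)).Subsingleton := by
  suffices ∀ z ∈ PC (outer u v), z = projPt u from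
    fun x hx y hy => (this x hx).trans (this y hy).symm
  rintro z ⟨w, hw, hne, rfl⟩
  obtain ⟨c, hc⟩ := mem_ColSpace_iff.1 hw
  have hw' : w = fun i => max (c 0 + v 0) (c 1 + v 1) + u i := funext fun i => by
    simp only [hc i, outer, max_add]
    congr 1 <;> ac_rfl
  generalize max (c 0 + v 0) (c 1 + v 1) = μ at hw'
  cases μ using WithBot.recBotCoe with
  | bot => exact absurd (by simp only [hw', WithBot.bot_add]; rfl) hne
  | coe t => rw [hw', projPt_shift]

theorem toE_mem_PC (b c : Rb) : toE c ∈ PC (mat2 0 b c 0) := by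
  convert projPt_col_mem_PC (mat2 0 b c 0) 0 (Or.inl (by simp)) using 1
  simp [projPt, ← WithBot.coe_zero]

theorem neg_toE_mem_PC (b c : Rb) : -toE b ∈ PC (mat2 0 b c 0) := by
  convert projPt_col_mem_PC (mat2 0 b c 0) 1 (Or.inr (by simp)) using 1
  simp [projPt, ← WithBot.coe_zero]

theorem tMul_outer_tMul_outer (u v : Fin 2 → Rb) (A : Mat2) :
    ∃ μ : Rb, tMul (tMul (outer u v) A) (outer u v) = fun i j => μ + outer u v i j := by
  refine ⟨max (max (v 0 + A 0 0 + u 0) (v 1 + A 1 0 + u 0))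
    (max (v 0 + A 0 1 + u 1) (v 1 + A 1 1 + u 1)), ?_⟩
  ext i j
  simp only [tMul_apply, outer, max_add]
  congr 1 <;> congr 1 <;> ac_rfl

theorem exists_shift_of_mem_Hclass_outer {u v : Fin 2 → Rb} {A : Mat2}
    (hE : tMul (outer u v) (outer u v) = outer u v) (hne : outer u v ≠ ⊥)
    (hA : A ∈ Hclass (outer u v)) : ∃ t : ℝ, A = shift t (outer u v) := by
  obtain ⟨hEA, hAE, ⟨Z, hZ⟩, -⟩ := (mem_Hclass_iff hE).1 hA
  obtain ⟨μ, hμ⟩ := tMul_outer_tMul_outer u v A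
  rw [hEA, hAE] at hμ
  cases μ using WithBot.recBotCoe with
  | bot =>
    refine absurd ?_ hne
    rw [← hZ, hμ]
    exact tMul_bot_left Z
  | coe t => exact ⟨t, hμ⟩

section ZeroDiagonal

variable {b c p q r s : Rb}

theorem zeroDiag_tMul_eq_self_iff :
    tMul (mat2 0 b c 0) (mat2 p q r s) = mat2 p q r s ↔
      b + r ≤ p ∧ b + s ≤ q ∧ c + p ≤ r ∧ c + q ≤ s := by
  simp only [tMul_mat2, mat2_inj, zero_add, max_eq_left_iff, max_eq_right_iff]

theorem tMul_zeroDiag_eq_self_iff :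
    tMul (mat2 p q r s) (mat2 0 b c 0) = mat2 p q r s ↔
      q + c ≤ p ∧ p + b ≤ q ∧ s + c ≤ r ∧ r + b ≤ s := by
  simp only [tMul_mat2, mat2_inj, add_zero, max_eq_left_iff, max_eq_right_iff]

theorem zeroDiag_idempotent (hbc : b + c ≤ 0) :
    tMul (mat2 0 b c 0) (mat2 0 b c 0) = mat2 0 b c 0 :=
  zeroDiag_tMul_eq_self_iff.2 ⟨hbc, by rw [add_zero], by rw [add_zero], by rwa [add_comm]⟩

-- Together with `E ⊗ A = A`, the last two conjuncts say that some column of `A` projects to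
-- `c` and some column to `-b`: the columns of `A` must reach both ends of `PC(E)`.
theorem of_tMul_eq_zeroDiag {Z : Mat2} (h : tMul (mat2 p q r s) Z = mat2 0 b c 0) :
    (p ≠ ⊥ ∨ q ≠ ⊥) ∧ (r ≠ ⊥ ∨ s ≠ ⊥) ∧
      (r ≤ c + p ∨ s ≤ c + q) ∧ (p ≤ b + r ∨ q ≤ b + s) := by
  rw [eq_mat2 Z, tMul_mat2, mat2_inj] at h
  obtain ⟨h00, h01, h10, h11⟩ := h
  exact ⟨ne_bot_or_ne_bot_of_max_add_eq_zero h00, ne_bot_or_ne_bot_of_max_add_eq_zero h11,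
    le_add_or_le_add_of_max_add_eq_zero h00 h10.le,
    le_add_or_le_add_of_max_add_eq_zero h11 h01.le⟩

theorem of_tMul_eq_zeroDiag' {W : Mat2} (h : tMul W (mat2 p q r s) = mat2 0 b c 0) :
    (p ≠ ⊥ ∨ r ≠ ⊥) ∧ (q ≠ ⊥ ∨ s ≠ ⊥) ∧
      (q ≤ b + p ∨ s ≤ b + r) ∧ (p ≤ c + q ∨ r ≤ c + s) := by
  have h' := congrArg transp h
  rw [transp_tMul, transp_mat2, transp_mat2] at h'
  exact of_tMul_eq_zeroDiag h'

end ZeroDiagonal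

theorem zeroDiag_ne_bot (b c : Rb) : mat2 0 b c 0 ≠ ⊥ := fun h => by
  simpa using congrFun (congrFun h 0) 0

theorem exists_shift_of_mem_Hclass_upper {b : ℝ} {A : Mat2}
    (hA : A ∈ Hclass (mat2 0 b ⊥ 0)) : ∃ t : ℝ, A = shift t (mat2 0 b ⊥ 0) := by
  have hE := zeroDiag_idempotent (b := (b : Rb)) (c := ⊥) (by simp)
  rw [eq_mat2 A] at hA ⊢
  generalize A 0 0 = p, A 0 1 = q, A 1 0 = r, A 1 1 = s at hA ⊢
  obtain ⟨hEA, hAE, ⟨Z, hZ⟩, ⟨W, hW⟩⟩ := (mem_Hclass_iff hE).1 hA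
  obtain ⟨hrp, hsq, -, -⟩ := zeroDiag_tMul_eq_self_iff.1 hEA
  obtain ⟨-, hpq, -, -⟩ := tMul_zeroDiag_eq_self_iff.1 hAE
  obtain ⟨-, hrs, -, hpq'⟩ := of_tMul_eq_zeroDiag hZ
  obtain ⟨hpr, -, hqp, hpr'⟩ := of_tMul_eq_zeroDiag' hW
  simp only [WithBot.bot_add, le_bot_iff] at hpr'
  obtain rfl : r = ⊥ := hpr'.elim (fun hp => by simpa [hp] using hrp) id
  lift p to ℝ using hpr.resolve_right (· rfl)
  lift s to ℝ using hrs.resolve_left (· rfl)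
  lift q to ℝ using ne_bot_of_coe_add_le (add_comm (p : Rb) b ▸ hpq) WithBot.coe_ne_bot
  simp only [WithBot.add_bot, le_bot_iff, WithBot.coe_ne_bot, false_or, or_false] at hpq' hqp
  norm_cast at hsq hpq hpq' hqp
  refine ⟨p, ?_⟩
  rw [shift_mat2, mat2_inj]
  norm_cast
  refine ⟨by simp, ?_, by simp, ?_⟩ <;> linarith

theorem exists_shift_of_mem_Hclass_lower {c : ℝ} {A : Mat2}
    (hA : A ∈ Hclass (mat2 0 ⊥ c 0)) : ∃ t : ℝ, A = shift t (mat2 0 ⊥ c 0) := by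
  have hA' := transp_mem_Hclass hA
  rw [transp_mat2] at hA'
  obtain ⟨t, ht⟩ := exists_shift_of_mem_Hclass_upper hA'
  exact ⟨t, by simpa only [transp_transp, transp_shift, transp_mat2] using congrArg transp ht⟩

section RealZeroDiagonal

variable {b c : ℝ}

noncomputable def zeroDiagSqrt (b c : ℝ) : Mat2 :=
  mat2 ((b + c) / 2 : ℝ) ((b - c) / 2 : ℝ) ((c - b) / 2 : ℝ) ((b + c) / 2 : ℝ)

theorem zeroDiag_tMul_zeroDiagSqrt (hbc : b + c < 0) :
    tMul (mat2 0 b c 0) (zeroDiagSqrt b c) = zeroDiagSqrt b c := by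
  refine zeroDiag_tMul_eq_self_iff.2 ?_
  norm_cast
  refine ⟨?_, ?_, ?_, ?_⟩ <;> linarith

theorem zeroDiagSqrt_tMul_zeroDiag (hbc : b + c < 0) :
    tMul (zeroDiagSqrt b c) (mat2 0 b c 0) = zeroDiagSqrt b c := by
  refine tMul_zeroDiag_eq_self_iff.2 ?_
  norm_cast
  refine ⟨?_, ?_, ?_, ?_⟩ <;> linarith

theorem zeroDiagSqrt_tMul_self (hbc : b + c < 0) :
    tMul (zeroDiagSqrt b c) (zeroDiagSqrt b c) = mat2 0 b c 0 := by
  rw [zeroDiagSqrt, tMul_mat2, mat2_inj]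
  norm_cast
  refine ⟨?_, ?_, ?_, ?_⟩ <;> simp only [max_def] <;> split_ifs <;> linarith

theorem exists_shift_of_mem_Hclass_zeroDiag (hbc : b + c < 0) {A : Mat2}
    (hA : A ∈ Hclass (mat2 0 b c 0)) :
    ∃ t : ℝ, A = shift t (mat2 0 b c 0) ∨ A = shift t (zeroDiagSqrt b c) := by
  have hE := zeroDiag_idempotent (b := (b : Rb)) (c := c) (by exact_mod_cast hbc.le)
  rw [eq_mat2 A] at hA ⊢
  generalize A 0 0 = p, A 0 1 = q, A 1 0 = r, A 1 1 = s at hA ⊢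
  obtain ⟨hEA, hAE, ⟨Z, hZ⟩, ⟨W, hW⟩⟩ := (mem_Hclass_iff hE).1 hA
  obtain ⟨h1, h2, h3, h4⟩ := zeroDiag_tMul_eq_self_iff.1 hEA
  obtain ⟨h5, h6, h7, h8⟩ := tMul_zeroDiag_eq_self_iff.1 hAE
  obtain ⟨hpq, -, d1, d2⟩ := of_tMul_eq_zeroDiag hZ
  obtain ⟨-, -, d3, d4⟩ := of_tMul_eq_zeroDiag' hW
  have hp : p ≠ ⊥ := hpq.elim id fun hq => ne_bot_of_coe_add_le (add_comm q c ▸ h5) hq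
  lift p to ℝ using hp
  lift q to ℝ using ne_bot_of_coe_add_le (add_comm (p : Rb) b ▸ h6) WithBot.coe_ne_bot
  lift r to ℝ using ne_bot_of_coe_add_le h3 WithBot.coe_ne_bot
  lift s to ℝ using ne_bot_of_coe_add_le h4 WithBot.coe_ne_bot
  norm_cast at h1 h2 h3 h4 h5 h6 h7 h8 d1 d2 d3 d4
  simp only [zeroDiagSqrt, shift_mat2, mat2_inj]
  norm_cast
  -- The inconsistent sign patterns are refuted by `linarith` inside either branch.
  rcases d1 with d1 | d1 <;> rcases d2 with d2 | d2 <;> rcases d3 with d3 | d3 <;>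
    rcases d4 with d4 | d4 <;>
    first
    | exact ⟨p, Or.inl ⟨by ring, by linarith, by linarith, by linarith⟩⟩
    | exact ⟨p - (b + c) / 2, Or.inr ⟨by ring, by linarith, by linarith, by linarith⟩⟩

end RealZeroDiagonal

theorem exists_diag_or_antidiag_of_mem_Hclass_one {A : Mat2}
    (hA : A ∈ Hclass (mat2 0 ⊥ ⊥ 0)) :
    ∃ l m : ℝ, A = mat2 l ⊥ ⊥ m ∨ A = mat2 ⊥ l m ⊥ := by
  have hE := zeroDiag_idempotent (b := ⊥) (c := ⊥) (by simp)
  rw [eq_mat2 A] at hA ⊢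
  generalize A 0 0 = p, A 0 1 = q, A 1 0 = r, A 1 1 = s at hA ⊢
  obtain ⟨-, -, ⟨Z, hZ⟩, ⟨W, hW⟩⟩ := (mem_Hclass_iff hE).1 hA
  obtain ⟨hpq, hrs, hrs', hpq'⟩ := of_tMul_eq_zeroDiag hZ
  obtain ⟨hpr, -, -, hpr'⟩ := of_tMul_eq_zeroDiag' hW
  simp only [WithBot.bot_add, le_bot_iff] at hrs' hpq' hpr'
  by_cases hp : p = ⊥
  · subst hp
    lift q to ℝ using hpq.resolve_left (· rfl)
    lift r to ℝ using hpr.resolve_left (· rfl)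
    obtain rfl := hrs'.resolve_left WithBot.coe_ne_bot
    exact ⟨q, r, Or.inr rfl⟩
  · lift p to ℝ using hp
    obtain rfl := hpq'.resolve_left WithBot.coe_ne_bot
    obtain rfl := hpr'.resolve_left WithBot.coe_ne_bot
    lift s to ℝ using hrs.resolve_left (· rfl)
    exact ⟨p, s, Or.inl rfl⟩

theorem exists_bijOn_real_of_subset_shifts {E : Mat2} (hE : tMul E E = E) (hne : E ≠ ⊥)
    (h : ∀ A ∈ Hclass E, ∃ t : ℝ, A = shift t E) :
    ∃ f : Mat2 → ℝ, Set.BijOn f (Hclass E) Set.univ ∧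
      ∀ A ∈ Hclass E, ∀ B ∈ Hclass E, f (tMul A B) = f A + f B := by
  have hmul (s t : ℝ) : shift (s + t) E = tMul (shift s E) (shift t E) := by
    rw [tMul_shift_left, tMul_shift_right, shift_shift, hE]
  refine exists_bijOn_hom_of_injective (fun t => shift t E) ?_ ?_ hmul
  · obtain ⟨i, j, hij⟩ : ∃ i j, E i j ≠ ⊥ := by
      by_contra! h; exact hne (funext fun i => funext (h i))
    lift E i j to ℝ using hij with e he
    intro s t hst
    have := congrFun (congrFun hst i) j
    simp only [shift, ← he, ← WithBot.coe_add, WithBot.coe_inj] at this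
    linarith
  · have hsub := range_subset_Hclass_of_hom (fun t : ℝ => shift t E) 0 hmul
      (fun t => ⟨zero_add t, add_zero t⟩) fun t => ⟨-t, add_neg_cancel t, neg_add_cancel t⟩
    rw [shift_zero] at hsub
    exact hsub.antisymm fun A hA => (h A hA).imp fun t ht => ht.symm

theorem zmod_two_eq_zero_or_eq_one : ∀ z : ZMod 2, z = 0 ∨ z = 1 := by
  decide

theorem exists_bijOn_real_zmod_zeroDiag {b c : ℝ} (hbc : b + c < 0) :
    ∃ f : Mat2 → ℝ × ZMod 2, Set.BijOn f (Hclass (mat2 0 b c 0)) Set.univ ∧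
      ∀ A ∈ Hclass (mat2 0 b c 0), ∀ B ∈ Hclass (mat2 0 b c 0),
        f (tMul A B) = f A + f B := by
  set E := mat2 0 b c 0
  set J := zeroDiagSqrt b c
  have hE : tMul E E = E := zeroDiag_idempotent (by exact_mod_cast hbc.le)
  let g : ℝ × ZMod 2 → Mat2 := fun x => shift x.1 (if x.2 = 0 then E else J)
  have hmul (x y : ℝ × ZMod 2) : g (x + y) = tMul (g x) (g y) := by
    simp only [g, tMul_shift_left, tMul_shift_right, shift_shift, Prod.fst_add, Prod.snd_add]
    rw [add_comm y.1]
    congr 1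
    rcases zmod_two_eq_zero_or_eq_one x.2 with hx | hx <;>
      rcases zmod_two_eq_zero_or_eq_one y.2 with hy | hy <;>
      simp [hx, hy, hE, zeroDiag_tMul_zeroDiagSqrt hbc, zeroDiagSqrt_tMul_zeroDiag hbc,
        zeroDiagSqrt_tMul_self hbc, J, E, show (1 : ZMod 2) + 1 = 0 from rfl]
  refine exists_bijOn_hom_of_injective g ?_ ?_ hmul
  · rintro ⟨t, z⟩ ⟨t', z'⟩ h
    rcases zmod_two_eq_zero_or_eq_one z with rfl | rfl <;>
      rcases zmod_two_eq_zero_or_eq_one z' with rfl | rfl <;>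
      simp only [g, E, J, zeroDiagSqrt, shift_mat2, mat2_inj, if_pos, if_neg one_ne_zero] at h <;>
      norm_cast at h
    all_goals
      obtain ⟨h1, h2, -, -⟩ := h
      first | (exfalso; linarith) | (rw [Prod.mk.injEq]; exact ⟨by linarith, rfl⟩)
  · have hsub := range_subset_Hclass_of_hom g 0 hmul (fun x => ⟨zero_add x, add_zero x⟩)
      fun x => ⟨-x, add_neg_cancel x, neg_add_cancel x⟩
    simp only [g, Prod.fst_zero, Prod.snd_zero, if_pos, shift_zero] at hsub
    refine hsub.antisymm fun A hA => ?_
    obtain ⟨t, ht | ht⟩ := exists_shift_of_mem_Hclass_zeroDiag hbc hA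
    exacts [⟨(t, 0), ht.symm⟩, ⟨(t, 1), ht.symm⟩]

theorem exists_bijOn_wreath_one :
    ∃ f : Mat2 → (ℝ × ℝ) × ZMod 2, Set.BijOn f (Hclass (mat2 0 ⊥ ⊥ 0)) Set.univ ∧
      ∀ A ∈ Hclass (mat2 0 ⊥ ⊥ 0), ∀ B ∈ Hclass (mat2 0 ⊥ ⊥ 0),
        f (tMul A B) = wMul (f A) (f B) := by
  let g : (ℝ × ℝ) × ZMod 2 → Mat2 := fun x =>
    if x.2 = 0 then mat2 x.1.1 ⊥ ⊥ x.1.2 else mat2 ⊥ x.1.1 x.1.2 ⊥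
  have h11 : (1 : ZMod 2) + 1 = 0 := rfl
  have hmul (x y : (ℝ × ℝ) × ZMod 2) : g (wMul x y) = tMul (g x) (g y) := by
    obtain ⟨⟨l, m⟩, z⟩ := x
    obtain ⟨⟨l', m'⟩, z'⟩ := y
    rcases zmod_two_eq_zero_or_eq_one z with rfl | rfl <;>
      rcases zmod_two_eq_zero_or_eq_one z' with rfl | rfl <;>
      simp [g, wMul, tMul_mat2, h11]
  refine exists_bijOn_hom_of_injective g ?_ ?_ hmul
  · rintro ⟨⟨l, m⟩, z⟩ ⟨⟨l', m'⟩, z'⟩ h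
    rcases zmod_two_eq_zero_or_eq_one z with rfl | rfl <;>
      rcases zmod_two_eq_zero_or_eq_one z' with rfl | rfl <;>
      simp_all [g, mat2_inj]
  · have hinv (x : (ℝ × ℝ) × ZMod 2) :
        ∃ y, wMul x y = ((0, 0), 0) ∧ wMul y x = ((0, 0), 0) := by
      obtain ⟨⟨l, m⟩, z⟩ := x
      rcases zmod_two_eq_zero_or_eq_one z with rfl | rfl
      exacts [⟨((-l, -m), 0), by simp [wMul]⟩, ⟨((-m, -l), 1), by simp [wMul, h11]⟩]
    have hsub : Set.range g ⊆ Hclass (mat2 0 ⊥ ⊥ 0) := by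
      simpa [g] using range_subset_Hclass_of_hom g ((0, 0), 0) hmul
        (fun x => ⟨by simp [wMul, Prod.mk_zero_zero], by simp [wMul, Prod.mk_zero_zero]⟩) hinv
    refine hsub.antisymm fun A hA => ?_
    obtain ⟨l, m, rfl | rfl⟩ := exists_diag_or_antidiag_of_mem_Hclass_one hA
    exacts [⟨((l, m), 0), rfl⟩, ⟨((l, m), 1), rfl⟩]

theorem Hclass_eq_singleton_of_PC_eq_empty {E : Mat2} (h : PC E = ∅) : Hclass E = {E} := by
  obtain rfl : E = ⊥ := by
    by_contra hE
    exact (PC_nonempty hE).ne_empty h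
  exact Hclass_bot

theorem exists_bijOn_real_of_PC {E : Mat2} (hE : tMul E E = E)
    (hPC : (∃ x : EReal, PC E = {x}) ∨
      ∃ a : ℝ, PC E = Set.Icc ⊥ (a : EReal) ∨ PC E = Set.Icc (a : EReal) ⊤) :
    ∃ f : Mat2 → ℝ, Set.BijOn f (Hclass E) Set.univ ∧
      ∀ A ∈ Hclass E, ∀ B ∈ Hclass E, f (tMul A B) = f A + f B := by
  have h_ne : (PC E).Nonempty := by
    rcases hPC with ⟨x, h⟩ | ⟨a, h | h⟩ <;> simp [h]
  have h_bot_top : ⊥ ∈ PC E → ⊤ ∉ PC E := by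
    rcases hPC with ⟨x, h⟩ | ⟨a, h | h⟩ <;> simp [h]
    rintro rfl; exact top_ne_bot
  have h_real : ⊥ ∉ PC E → ⊤ ∉ PC E → (PC E).Subsingleton := by
    rcases hPC with ⟨x, h⟩ | ⟨a, h | h⟩ <;> simp [h]
  rcases idempotent_cases hE with rfl | ⟨u, v, rfl, hne⟩ | ⟨b, c, hbc, rfl⟩
  · exact absurd PC_bot h_ne.ne_empty
  · exact exists_bijOn_real_of_subset_shifts hE hne
      fun A => exists_shift_of_mem_Hclass_outer hE hne
  cases b using WithBot.recBotCoe with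
  | bot =>
    cases c using WithBot.recBotCoe with
    | bot => exact absurd (by simpa using neg_toE_mem_PC ⊥ ⊥) (h_bot_top (toE_mem_PC ⊥ ⊥))
    | coe c =>
      exact exists_bijOn_real_of_subset_shifts hE (zeroDiag_ne_bot _ _)
        (fun A => exists_shift_of_mem_Hclass_lower)
  | coe b =>
    cases c using WithBot.recBotCoe with
    | bot =>
      exact exists_bijOn_real_of_subset_shifts hE (zeroDiag_ne_bot _ _)
        (fun A => exists_shift_of_mem_Hclass_upper)
    | coe c =>
      have := h_real (bot_notMem_PC (by simp) (by simp)) (top_notMem_PC (by simp) (by simp))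
        (toE_mem_PC b c) (neg_toE_mem_PC b c)
      rw [toE_coe, toE_coe, ← EReal.coe_neg, EReal.coe_eq_coe_iff] at this
      norm_cast at hbc
      linarith

theorem exists_bijOn_real_zmod_of_PC {E : Mat2} (hE : tMul E E = E)
    (hPC : ∃ x y : ℝ, x < y ∧ PC E = Set.Icc (x : EReal) (y : EReal)) :
    ∃ f : Mat2 → ℝ × ZMod 2, Set.BijOn f (Hclass E) Set.univ ∧
      ∀ A ∈ Hclass E, ∀ B ∈ Hclass E, f (tMul A B) = f A + f B := by
  obtain ⟨x, y, hxy, h⟩ := hPC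
  have h_bot : ⊥ ∉ PC E := by simp [h]
  have h_top : ⊤ ∉ PC E := by simp [h]
  have h_ss : ¬(PC E).Subsingleton := fun hs => hxy.ne (by
    exact_mod_cast hs (h ▸ Set.left_mem_Icc.2 (by exact_mod_cast hxy.le))
      (h ▸ Set.right_mem_Icc.2 (by exact_mod_cast hxy.le)))
  rcases idempotent_cases hE with rfl | ⟨u, v, rfl, -⟩ | ⟨b, c, hbc, rfl⟩
  · exact absurd (PC_bot ▸ Set.subsingleton_empty) h_ss
  · exact absurd (PC_outer_subsingleton u v) h_ss
  cases b using WithBot.recBotCoe with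
  | bot => exact absurd (by simpa using neg_toE_mem_PC ⊥ c) h_top
  | coe b =>
    cases c using WithBot.recBotCoe with
    | bot => exact absurd (by simpa using toE_mem_PC b ⊥) h_bot
    | coe c => exact exists_bijOn_real_zmod_zeroDiag (by exact_mod_cast hbc)

theorem exists_bijOn_wreath_of_PC {E : Mat2} (hE : tMul E E = E) (hPC : PC E = Set.univ) :
    ∃ f : Mat2 → (ℝ × ℝ) × ZMod 2, Set.BijOn f (Hclass E) Set.univ ∧
      ∀ A ∈ Hclass E, ∀ B ∈ Hclass E, f (tMul A B) = wMul (f A) (f B) := by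
  have h_ss : ¬(PC E).Subsingleton := fun hs =>
    bot_ne_top (hs (hPC ▸ Set.mem_univ (⊥ : EReal)) (hPC ▸ Set.mem_univ ⊤))
  rcases idempotent_cases hE with rfl | ⟨u, v, rfl, -⟩ | ⟨b, c, -, rfl⟩
  · exact absurd (PC_bot ▸ Set.subsingleton_empty) h_ss
  · exact absurd (PC_outer_subsingleton u v) h_ss
  cases b using WithBot.recBotCoe with
  | coe b => exact absurd (hPC ▸ Set.mem_univ ⊤) (top_notMem_PC (by simp) (by simp))
  | bot =>
    cases c using WithBot.recBotCoe with
    | coe c => exact absurd (hPC ▸ Set.mem_univ ⊥) (bot_notMem_PC (by simp) (by simp))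
    | bot => exact exists_bijOn_wreath_one

/-- the structure of the maximal subgroups of `M₂(ℝ̄)`, i.e. of the
`𝓗`-classes of idempotents (each such class being a group under `⊗` with identity `E`):
(i) if `PC(E) = ∅` the group is trivial; (ii) if `PC(E)` is a singleton, or a closed
interval with exactly one real and one infinite endpoint, it is isomorphic to `(ℝ, +)`;
(iii) if `PC(E)` is a closed interval with two real endpoints, it is isomorphic to
`ℝ × ℤ/2ℤ`; (iv) if `PC(E) = ℝ̂`, it is isomorphic to the wreath product `ℝ ≀ ℤ/2ℤ`.
Isomorphism is expressed by a bijection from the `𝓗`-class to the target group carrying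
`⊗` to the group operation. -/
theorem maximal_subgroups (E : Mat2) (hE : tMul E E = E) :
    (PC E = ∅ → Hclass E = {E}) ∧
    (((∃ x : EReal, PC E = {x}) ∨
        (∃ a : ℝ, PC E = Set.Icc ⊥ (a : EReal) ∨ PC E = Set.Icc (a : EReal) ⊤)) →
      ∃ f : Mat2 → ℝ, Set.BijOn f (Hclass E) Set.univ ∧
        ∀ A ∈ Hclass E, ∀ B ∈ Hclass E, f (tMul A B) = f A + f B) ∧
    ((∃ x y : ℝ, x < y ∧ PC E = Set.Icc (x : EReal) (y : EReal)) →
      ∃ f : Mat2 → ℝ × ZMod 2, Set.BijOn f (Hclass E) Set.univ ∧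
        ∀ A ∈ Hclass E, ∀ B ∈ Hclass E, f (tMul A B) = f A + f B) ∧
    (PC E = Set.univ →
      ∃ f : Mat2 → (ℝ × ℝ) × ZMod 2, Set.BijOn f (Hclass E) Set.univ ∧
        ∀ A ∈ Hclass E, ∀ B ∈ Hclass E, f (tMul A B) = wMul (f A) (f B)) :=
  ⟨Hclass_eq_singleton_of_PC_eq_empty, exists_bijOn_real_of_PC hE,
    exists_bijOn_real_zmod_of_PC hE, exists_bijOn_wreath_of_PC hE⟩
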